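/- arXiv:2009.03484 — 3 statements merged into one kernel-verified Lean document; each statement's English description precedes it below -/
import Mathlib

section
/- Let c, d be positive integers with c ≥ d + 4, and let F be a finite family of open intervals (α,β) with integer endpoints 1 ≤ α < β ≤ c that is non-crossing (any two intervals are disjoint or one contains the other) and whose Hasse diagram under inclusion is a rooted binary tree with root (1,c), satisfying: every node with exactly one child I₁ has length(parent) = length(I₁) + 1, every node with two children I₁, I₂ satisfies I₁ ∩ I₂ = ∅ and length(I₁) + length(I₂) = length(parent), and the leaves are exactly the d + 2 unit intervals {(β,β+1) : β ∈ {α,…,α+ℓ} ∪ {c−d+ℓ−1,…,c−1}} for some α and some ℓ with 2 ≤ ℓ ≤ d+1. Then |F| = c + d. -/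
namespace ScrollComb

/-- Open intervals with integer endpoints, identified with pairs `(a, b)`, `a < b`. -/
abbrev Iv : Type := ℤ × ℤ

/-- `I` is contained in `J` as open real intervals. -/
def Sub (I J : Iv) : Prop := J.1 ≤ I.1 ∧ I.2 ≤ J.2

/-- The length of an interval. -/
def len (I : Iv) : ℤ := I.2 - I.1

/-- Two open intervals with integer endpoints are disjoint. -/
def Disj (I J : Iv) : Prop := I.2 ≤ J.1 ∨ J.2 ≤ I.1

/-- `I` is a child of `J` in the Hasse diagram of `(F, ⊆)`:  `I ⊊ J` and nothing of `F`
lies strictly between them. -/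
def IsChild (F : Finset Iv) (I J : Iv) : Prop :=
  I ∈ F ∧ J ∈ F ∧ Sub I J ∧ I ≠ J ∧
    ∀ K ∈ F, Sub I K → Sub K J → K = I ∨ K = J

/-- `I` is a leaf (a minimal element) of the family `F`. -/
def IsLeaf (F : Finset Iv) (I : Iv) : Prop :=
  I ∈ F ∧ ∀ K ∈ F, Sub K I → K = I

/-- The prescribed leaves set `𝔏_α`: the unit intervals `(β, β+1)` for
`β ∈ {α, …, α+ℓ} ∪ {c-d+ℓ-1, …, c-1}`. -/
noncomputable def leavesSet (c d α ℓ : ℤ) : Finset Iv :=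
  (Finset.Icc α (α + ℓ) ∪ Finset.Icc (c - d + ℓ - 1) (c - 1)).image fun β => (β, β + 1)

/-- The structural conditions on a facet family:  a non-crossing family of open integer
subintervals of `(1, c)` whose Hasse diagram under inclusion is a rooted binary tree with
root `(1, c)`, satisfying the length conditions on nodes with one child resp. two children. -/
structure IsTreeFam (c : ℤ) (F : Finset Iv) : Prop where
  bounds : ∀ I ∈ F, 1 ≤ I.1 ∧ I.1 < I.2 ∧ I.2 ≤ c
  root_mem : ((1 : ℤ), c) ∈ F
  noncrossing : ∀ I ∈ F, ∀ J ∈ F, Disj I J ∨ Sub I J ∨ Sub J I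
  binary : ∀ J ∈ F, {I | IsChild F I J}.ncard ≤ 2
  one_child : ∀ J ∈ F, ∀ I, IsChild F I J → (∀ I', IsChild F I' J → I' = I) →
    len J = len I + 1 ∧ (J.1 < I.1 → (J.1, J.1 + 1) ∉ F) ∧ (I.2 < J.2 → (I.2, I.2 + 1) ∉ F)
  two_children : ∀ J ∈ F, ∀ I₁ I₂, IsChild F I₁ J → IsChild F I₂ J → I₁ ≠ I₂ →
    Disj I₁ I₂ ∧ len I₁ + len I₂ = len J

/-- A facet family with prescribed leaves data `(α, ℓ)`. -/
structure IsScrollFacetWith (c d α ℓ : ℤ) (F : Finset Iv) : Prop where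
  tree : IsTreeFam c F
  α_lb : 1 ≤ α
  α_ub : α ≤ c - d - 2
  ℓ_lb : 2 ≤ ℓ
  ℓ_ub : ℓ ≤ d + 1
  leaves : ∀ I, IsLeaf F I ↔ I ∈ leavesSet c d α ℓ

/-- A facet of the initial complex of the fiber cone of a rational normal scroll. -/
def IsScrollFacet (c d : ℤ) (F : Finset Iv) : Prop :=
  ∃ α ℓ, IsScrollFacetWith c d α ℓ F

/-! A node of the tree with one child is one longer than its child, a node with two children
is as long as both together, and every leaf has length 1. Hence, by induction over the tree,
the subtree below a node `J` has `len J + (number of leaves below J) - 1` nodes; at the root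
`(1, c)`, with the `d + 2` prescribed leaves, this gives `c - 1 + d + 2 - 1 = c + d`. -/

lemma Sub.refl (I : Iv) : Sub I I := ⟨le_rfl, le_rfl⟩

lemma Sub.trans {I J K : Iv} (h₁ : Sub I J) (h₂ : Sub J K) : Sub I K :=
  ⟨h₂.1.trans h₁.1, h₁.2.trans h₂.2⟩

lemma Sub.antisymm {I J : Iv} (h₁ : Sub I J) (h₂ : Sub J I) : I = J :=
  Prod.ext (le_antisymm h₂.1 h₁.1) (le_antisymm h₁.2 h₂.2)

lemma Sub.len_lt {I J : Iv} (h : Sub I J) (hne : I ≠ J) : len I < len J := by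
  obtain ⟨h₁, h₂⟩ := h
  have : I.1 ≠ J.1 ∨ I.2 ≠ J.2 := by
    by_contra! heq
    exact hne (Prod.ext heq.1 heq.2)
  unfold len
  omega

lemma Disj.not_sub {I₁ I₂ K : Iv} (hd : Disj I₁ I₂) (hK : K.1 < K.2) (h₁ : Sub K I₁) :
    ¬ Sub K I₂ := by
  rintro h₂
  obtain ⟨_, _⟩ := h₁
  obtain ⟨_, _⟩ := h₂
  rcases hd with h | h <;> omega

instance (I J : Iv) : Decidable (Sub I J) := inferInstanceAs (Decidable (_ ∧ _))

instance (F : Finset Iv) (I : Iv) : Decidable (IsLeaf F I) :=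
  inferInstanceAs (Decidable (_ ∧ _))

instance (F : Finset Iv) (I J : Iv) : Decidable (IsChild F I J) :=
  inferInstanceAs (Decidable (_ ∧ _))

def below (F : Finset Iv) (J : Iv) : Finset Iv := F.filter (Sub · J)

def children (F : Finset Iv) (J : Iv) : Finset Iv := F.filter (IsChild F · J)

def leavesBelow (F : Finset Iv) (J : Iv) : Finset Iv := (below F J).filter (IsLeaf F)

section Hasse

variable {F : Finset Iv} {I J K M : Iv}

@[simp]
lemma mem_below : K ∈ below F J ↔ K ∈ F ∧ Sub K J := by
  simp [below]

@[simp]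
lemma mem_children : M ∈ children F J ↔ IsChild F M J := by
  simpa [children] using fun h : IsChild F M J => h.1

@[simp]
lemma mem_leavesBelow : K ∈ leavesBelow F J ↔ K ∈ F ∧ Sub K J ∧ IsLeaf F K := by
  simp [leavesBelow, and_assoc]

lemma leavesBelow_subset_below : leavesBelow F J ⊆ below F J :=
  Finset.filter_subset _ _

lemma IsChild.notMem_below (hM : IsChild F M J) : J ∉ below F M := fun h =>
  hM.2.2.2.1 (hM.2.2.1.antisymm (mem_below.1 h).2)

lemma IsChild.below_subset (hM : IsChild F M J) : below F M ⊆ below F J := fun _ hK =>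
  mem_below.2 ⟨(mem_below.1 hK).1, (mem_below.1 hK).2.trans hM.2.2.1⟩

/-- Take `M` of maximal length with `K ⊆ M ⊊ J`. -/
lemma exists_isChild_of_sub (hK : K ∈ F) (hJ : J ∈ F) (hKJ : Sub K J) (hne : K ≠ J) :
    ∃ M, IsChild F M J ∧ Sub K M := by
  set T := F.filter fun M => Sub K M ∧ Sub M J ∧ M ≠ J
  have hKT : K ∈ T := Finset.mem_filter.2 ⟨hK, Sub.refl K, hKJ, hne⟩
  obtain ⟨M, hMT, hmax⟩ := T.exists_max_image len ⟨K, hKT⟩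
  obtain ⟨hMF, hKM, hMJ, hMne⟩ := Finset.mem_filter.1 hMT
  refine ⟨M, ⟨hMF, hJ, hMJ, hMne, fun K' hK' hMK' hK'J => ?_⟩, hKM⟩
  by_cases hK'ne : K' = J
  · exact Or.inr hK'ne
  · have hK'T : K' ∈ T := Finset.mem_filter.2 ⟨hK', hKM.trans hMK', hK'J, hK'ne⟩
    by_contra! h
    exact (hmax K' hK'T).not_gt (hMK'.len_lt (Ne.symm h.1))

lemma below_eq_insert_biUnion (hJ : J ∈ F) :
    below F J = insert J ((children F J).biUnion (below F)) := by
  ext K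
  simp only [Finset.mem_insert, Finset.mem_biUnion, mem_children]
  constructor
  · rintro hK
    obtain ⟨hKF, hKJ⟩ := mem_below.1 hK
    by_cases hne : K = J
    · exact Or.inl hne
    · obtain ⟨M, hM, hKM⟩ := exists_isChild_of_sub hKF hJ hKJ hne
      exact Or.inr ⟨M, hM, mem_below.2 ⟨hKF, hKM⟩⟩
  · rintro (rfl | ⟨M, hM, hK⟩)
    · exact mem_below.2 ⟨hJ, Sub.refl K⟩
    · exact hM.below_subset hK

lemma isLeaf_iff_children_eq_empty (hJ : J ∈ F) : IsLeaf F J ↔ children F J = ∅ := by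
  simp only [Finset.eq_empty_iff_forall_notMem, mem_children]
  constructor
  · rintro ⟨_, hmin⟩ M hM
    exact hM.2.2.2.1 (hmin M hM.1 hM.2.2.1)
  · refine fun h => ⟨hJ, fun K hK hKJ => ?_⟩
    by_contra hne
    obtain ⟨M, hM, _⟩ := exists_isChild_of_sub hK hJ hKJ hne
    exact h M hM

lemma leavesBelow_eq_biUnion (hJ : J ∈ F) (hne : children F J ≠ ∅) :
    leavesBelow F J = (children F J).biUnion (leavesBelow F) := by
  have hJleaf : ¬ IsLeaf F J := (isLeaf_iff_children_eq_empty hJ).not.2 hne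
  rw [leavesBelow, below_eq_insert_biUnion hJ, Finset.filter_insert, if_neg hJleaf,
    Finset.filter_biUnion]
  rfl

lemma IsLeaf.leavesBelow_eq (hJ : IsLeaf F J) : leavesBelow F J = {J} := by
  ext K
  simp only [mem_leavesBelow, Finset.mem_singleton]
  exact ⟨fun h => hJ.2 K h.1 h.2.1, by rintro rfl; exact ⟨hJ.1, Sub.refl K, hJ⟩⟩

lemma disjoint_below_of_disj (hpos : ∀ I ∈ F, I.1 < I.2) (hd : Disj I J) :
    Disjoint (below F I) (below F J) :=
  Finset.disjoint_left.2 fun K hKI hKJ =>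
    hd.not_sub (hpos K (mem_below.1 hKI).1) (mem_below.1 hKI).2 (mem_below.1 hKJ).2

end Hasse

section TreeFamily

variable {c : ℤ} {F : Finset Iv}

lemma IsTreeFam.card_children_le_two {J : Iv} (hT : IsTreeFam c F) (hJ : J ∈ F) :
    (children F J).card ≤ 2 := by
  have h := hT.binary J hJ
  rwa [show {I | IsChild F I J} = ↑(children F J) by ext; simp, Set.ncard_coe_finset] at h

lemma IsTreeFam.card_below_of_children {J : Iv} (hT : IsTreeFam c F)
    (hleaf : ∀ L, IsLeaf F L → len L = 1) (hJ : J ∈ F)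
    (ih : ∀ M, IsChild F M J →
      ((below F M).card : ℤ) = len M + (leavesBelow F M).card - 1) :
    ((below F J).card : ℤ) = len J + (leavesBelow F J).card - 1 := by
  rw [below_eq_insert_biUnion hJ]
  rcases Nat.lt_or_ge (children F J).card 1 with h0 | h12
  · have hempty : children F J = ∅ := Finset.card_eq_zero.1 (by omega)
    have hJleaf := (isLeaf_iff_children_eq_empty hJ).2 hempty
    simp [hempty, hJleaf.leavesBelow_eq, hleaf J hJleaf]
  have hne : children F J ≠ ∅ := Finset.nonempty_iff_ne_empty.1 (Finset.card_pos.1 h12)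
  rw [leavesBelow_eq_biUnion hJ hne]
  rcases (hT.card_children_le_two hJ).eq_or_lt with h2 | h1
  · obtain ⟨M₁, M₂, hM₁₂, hch⟩ := Finset.card_eq_two.1 h2
    have hM₁ : IsChild F M₁ J := mem_children.1 (by simp [hch])
    have hM₂ : IsChild F M₂ J := mem_children.1 (by simp [hch])
    obtain ⟨hd, hlen⟩ := hT.two_children J hJ M₁ M₂ hM₁ hM₂ hM₁₂
    have hdisj := disjoint_below_of_disj (fun I hI => (hT.bounds I hI).2.1) hd
    have hJM : J ∉ below F M₁ ∪ below F M₂ := by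
      simp only [Finset.mem_union, not_or]
      exact ⟨hM₁.notMem_below, hM₂.notMem_below⟩
    rw [hch, Finset.biUnion_insert, Finset.singleton_biUnion, Finset.biUnion_insert,
      Finset.singleton_biUnion, Finset.card_insert_of_notMem hJM,
      Finset.card_union_of_disjoint hdisj, Finset.card_union_of_disjoint
        (hdisj.mono leavesBelow_subset_below leavesBelow_subset_below)]
    push_cast
    linarith [ih M₁ hM₁, ih M₂ hM₂]
  · obtain ⟨M, hch⟩ := Finset.card_eq_one.1 (show (children F J).card = 1 by omega)
    have hM : IsChild F M J := mem_children.1 (by simp [hch])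
    have hlen := (hT.one_child J hJ M hM fun M' hM' => by
      simpa [hch] using mem_children.2 hM').1
    rw [hch, Finset.singleton_biUnion, Finset.singleton_biUnion,
      Finset.card_insert_of_notMem hM.notMem_below]
    push_cast
    linarith [ih M hM]

theorem IsTreeFam.card_below {J : Iv} (hT : IsTreeFam c F)
    (hleaf : ∀ L, IsLeaf F L → len L = 1) (hJ : J ∈ F) :
    ((below F J).card : ℤ) = len J + (leavesBelow F J).card - 1 :=
  hT.card_below_of_children hleaf hJ fun M hM => hT.card_below hleaf hM.1
termination_by (len J).toNat
decreasing_by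
  have := hM.2.2.1.len_lt hM.2.2.2.1
  have := (hT.bounds M hM.1).2.1
  unfold len at *
  omega

lemma IsTreeFam.below_root (hT : IsTreeFam c F) : below F (1, c) = F :=
  Finset.filter_true_of_mem fun K hK => ⟨(hT.bounds K hK).1, (hT.bounds K hK).2.2⟩

end TreeFamily

lemma len_of_mem_leavesSet {c d α ℓ : ℤ} {I : Iv} (hI : I ∈ leavesSet c d α ℓ) :
    len I = 1 := by
  obtain ⟨β, -, rfl⟩ := Finset.mem_image.1 hI
  simp [len]

lemma card_leavesSet {c d α ℓ : ℤ} (hα : α ≤ c - d - 2) (hℓ₀ : 0 ≤ ℓ) (hℓ : ℓ ≤ d + 1) :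
    ((leavesSet c d α ℓ).card : ℤ) = d + 2 := by
  have hinj : Function.Injective fun β : ℤ => ((β, β + 1) : Iv) := fun _ _ h =>
    congrArg Prod.fst h
  have hdisj : Disjoint (Finset.Icc α (α + ℓ)) (Finset.Icc (c - d + ℓ - 1) (c - 1)) :=
    Finset.disjoint_left.2 fun β h₁ h₂ => by
      rw [Finset.mem_Icc] at h₁ h₂
      omega
  rw [leavesSet, Finset.card_image_of_injective _ hinj, Finset.card_union_of_disjoint hdisj,
    Int.card_Icc, Int.card_Icc]
  omega

theorem card_of_isScrollFacet_general (c d : ℤ)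
    (F : Finset Iv) (hF : IsScrollFacet c d F) :
    (F.card : ℤ) = c + d := by
  obtain ⟨α, ℓ, h⟩ := hF
  have hleaves : leavesBelow F (1, c) = leavesSet c d α ℓ := by
    ext K
    rw [leavesBelow, h.tree.below_root, Finset.mem_filter, ← h.leaves]
    exact ⟨And.right, fun hK => ⟨hK.1, hK⟩⟩
  have hcount := h.tree.card_below (fun L hL => len_of_mem_leavesSet ((h.leaves L).1 hL))
    h.tree.root_mem
  rw [h.tree.below_root, hleaves,
    card_leavesSet h.α_ub (by linarith [h.ℓ_lb]) h.ℓ_ub] at hcount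
  simp only [len] at hcount
  omega

/-- If `c ≥ d + 4` and `F` is a family of open integer intervals in `(1,c)`
satisfying the binary-tree facet conditions with leaves the prescribed `d + 2` unit
intervals, then `|F| = c + d`. -/
theorem card_of_isScrollFacet (c d : ℤ) (hd : 1 ≤ d) (hc : d + 4 ≤ c)
    (F : Finset Iv) (hF : IsScrollFacet c d F) :
    (F.card : ℤ) = c + d :=
  card_of_isScrollFacet_general c d F hF

end ScrollComb
end

section
/- Let n₁ ≤ … ≤ n_d be positive integers with c = n₁ + ⋯ + n_d. For α ∈ [c−d−2] and i ∈ [d], let γ_{α,i} be the least index γ ≥ α+2 such that the γ-th column of the rearranged scroll matrix M involves variables from the i-th block. Define the leaves set 𝔏_α = {(β,β+1) : β ∈ {α,…,α+ℓ_α} ∪ {c−d+ℓ_α−1,…,c−1}} where ℓ_α is determined by {γ_{α,1},…,γ_{α,d}} = {α+2,…,α+ℓ_α} ⊔ {c−d+ℓ_α,…,c}. Then for each α ∈ [c−d−3], |𝔏_α \ 𝔏_{α+1}| = |𝔏_{α+1} \ 𝔏_α| = 1; moreover 𝔏_α \ 𝔏_{α+1} = {(α,α+1)}. -/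
namespace ScrollLeaves

/-- The prescribed leaves set `𝔏_α`: the unit intervals `(β, β+1)` for
`β ∈ {α, …, α+ℓ} ∪ {c-d+ℓ-1, …, c-1}`. -/
noncomputable def leavesSet (c d α ℓ : ℤ) : Finset (ℤ × ℤ) :=
  (Finset.Icc α (α + ℓ) ∪ Finset.Icc (c - d + ℓ - 1) (c - 1)).image fun β => (β, β + 1)

variable {d : ℕ} (n : Fin d → ℕ)

/-- The (1-based) position, among the first `c - d` columns of the rearranged scroll matrix
`M`, of the column which is the `j`-th column (0-based, `j ≤ nᵢ - 2`) of the `i`-th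
catalecticant block:  one lists, for `j = 0, 1, 2, …`, the `j`-th columns of the blocks
having at least `j + 2` columns, in increasing order of the block index. -/
def colPos (j : ℤ) (i : Fin d) : ℤ :=
  (∑ i' : Fin d, min j ((n i' : ℤ) - 1)) +
    ((Finset.univ.filter fun i' : Fin d => i' ≤ i ∧ j + 2 ≤ (n i' : ℤ)).card : ℤ)

/-- Column `γ` (1-based) of the rearranged scroll matrix `M` involves variables from the
`i`-th block.  The first `c - d` columns are as in `colPos`; the last `d` columns are the
last columns of the blocks `d, d-1, …, 1` in decreasing order of the block index. -/
def UsesBlock (c : ℤ) (γ : ℤ) (i : Fin d) : Prop :=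
  (γ ≤ c - d ∧ ∃ j : ℤ, 0 ≤ j ∧ j + 2 ≤ (n i : ℤ) ∧ γ = colPos n j i) ∨
  (c - d < γ ∧ γ ≤ c ∧ (i : ℤ) + 1 = c + 1 - γ)

/-!
Passing from `α` to `α + 1` raises the lower bound in the definition of `γ` by one, so
`γ (α + 1) i = γ α i` for every block except the single block `i₀` with `γ α i₀ = α + 2`.
Hence the value set `{α+3, …, α+1+ℓ'} ∪ {c-d+ℓ', …, c}` of `γ (α + 1)` lies in the value set
of `γ α` plus one point, which pins `ℓ' = ℓ (α + 1)` down to `ℓ` or `ℓ - 1`; in both cases the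
two leaves sets differ by exactly one interval on each side.
-/

theorem isLeast_eq_of_le_of_le {P : ℤ → Prop} {a b x y : ℤ}
    (hx : IsLeast {g | a ≤ g ∧ P g} x) (hy : IsLeast {g | b ≤ g ∧ P g} y)
    (hab : a ≤ b) (hbx : b ≤ x) : y = x :=
  le_antisymm (hy.2 ⟨hbx, hx.1.2⟩) (hy.mono hx fun _ hg => ⟨hab.trans hg.1, hg.2⟩)

theorem image_univ_subset_insert_image {ι β : Type*} [Fintype ι] [DecidableEq β]
    {f g : ι → β} (i₀ : ι) (hfg : ∀ i, i ≠ i₀ → g i = f i) :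
    Finset.univ.image g ⊆ insert (g i₀) (Finset.univ.image f) := by
  intro y hy
  obtain ⟨i, -, rfl⟩ := Finset.mem_image.mp hy
  rcases eq_or_ne i i₀ with rfl | hi
  · exact Finset.mem_insert_self _ _
  · exact Finset.mem_insert_of_mem (hfg i hi ▸ Finset.mem_image_of_mem f (Finset.mem_univ i))

noncomputable def gammaSet (c d α ℓ : ℤ) : Finset ℤ :=
  Finset.Icc (α + 2) (α + ℓ) ∪ Finset.Icc (c - d + ℓ) c

theorem card_gammaSet {c d α ℓ : ℤ} (hℓ : 2 ≤ ℓ) (hℓd : ℓ ≤ d + 1)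
    (hdisj : Disjoint (Finset.Icc (α + 2) (α + ℓ)) (Finset.Icc (c - d + ℓ) c)) :
    ((gammaSet c d α ℓ).card : ℤ) = d := by
  rw [gammaSet, Finset.card_union_of_disjoint hdisj, Nat.cast_add, Int.card_Icc, Int.card_Icc]
  omega

theorem injective_of_image_eq_gammaSet {c α ℓ : ℤ} {f : Fin d → ℤ} (hℓ : 2 ≤ ℓ)
    (hℓd : ℓ ≤ d + 1)
    (hdisj : Disjoint (Finset.Icc (α + 2) (α + ℓ)) (Finset.Icc (c - d + ℓ) c))
    (himage : Finset.univ.image f = gammaSet c d α ℓ) : Function.Injective f := by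
  have hcard : (Finset.univ.image f).card = (Finset.univ : Finset (Fin d)).card := by
    simpa [himage] using card_gammaSet hℓ hℓd hdisj
  exact Set.injOn_univ.mp (by simpa using Finset.card_image_iff.mp hcard)

theorem eq_or_eq_sub_one_of_gammaSet_succ_subset {c d α ℓ ℓ' x : ℤ}
    (hα : α ≤ c - d - 3) (hℓ : 2 ≤ ℓ) (hℓd : ℓ ≤ d + 1)
    (hsub : gammaSet c d (α + 1) ℓ' ⊆ insert x (gammaSet c d α ℓ)) :
    ℓ' = ℓ ∨ ℓ' = ℓ - 1 := by
  have mem : ∀ y, y ∈ gammaSet c d (α + 1) ℓ' → y = x ∨ y ∈ gammaSet c d α ℓ :=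
    fun y hy => Finset.mem_insert.mp (hsub hy)
  simp only [gammaSet, Finset.mem_union, Finset.mem_Icc] at mem
  -- otherwise two columns of `γ (α + 1)` lie outside the value set of `γ α`, but only `x` may
  have hle : ℓ' ≤ ℓ := by
    by_contra! h
    have := mem (α + ℓ + 1) (by omega)
    have := mem (α + ℓ + 2) (by omega)
    omega
  have hge : ℓ - 1 ≤ ℓ' := by
    by_contra! h
    have := mem (c - d + ℓ - 2) (by omega)
    have := mem (c - d + ℓ - 1) (by omega)
    omega
  omega

noncomputable def leafIndices (c d α ℓ : ℤ) : Finset ℤ :=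
  Finset.Icc α (α + ℓ) ∪ Finset.Icc (c - d + ℓ - 1) (c - 1)

theorem leavesSet_sdiff (c d α ℓ α' ℓ' : ℤ) :
    leavesSet c d α ℓ \ leavesSet c d α' ℓ' =
      (leafIndices c d α ℓ \ leafIndices c d α' ℓ').image fun β => (β, β + 1) :=
  (Finset.image_sdiff _ _ fun _ _ h => congrArg Prod.fst h).symm

section leafIndices

variable {c d α ℓ ℓ' : ℤ}

theorem leafIndices_sdiff_succ (hα : α ≤ c - d - 3) (hℓ : 0 ≤ ℓ)
    (hℓ' : ℓ' = ℓ ∨ ℓ' = ℓ - 1) :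
    leafIndices c d α ℓ \ leafIndices c d (α + 1) ℓ' = {α} := by
  ext β
  simp only [leafIndices, Finset.mem_sdiff, Finset.mem_union, Finset.mem_Icc,
    Finset.mem_singleton]
  omega

theorem leafIndices_succ_sdiff (hα : α ≤ c - d - 3) (hℓ : 1 ≤ ℓ) (hℓd : ℓ ≤ d + 1)
    (hℓ' : ℓ' = ℓ ∨ ℓ' = ℓ - 1) :
    leafIndices c d (α + 1) ℓ' \ leafIndices c d α ℓ =
      {if ℓ' = ℓ then α + 1 + ℓ else c - d + ℓ - 2} := by
  ext β
  simp only [leafIndices, Finset.mem_sdiff, Finset.mem_union, Finset.mem_Icc,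
    Finset.mem_singleton]
  split_ifs <;> omega

end leafIndices

theorem leavesSet_succ_diff
    (c : ℤ)
    (γ : ℤ → Fin d → ℤ)
    (hγ : ∀ α : ℤ, 1 ≤ α → α ≤ c - d - 2 → ∀ i : Fin d,
      IsLeast {g : ℤ | α + 2 ≤ g ∧ UsesBlock n c g i} (γ α i))
    (ℓ : ℤ → ℤ)
    (hℓ : ∀ α : ℤ, 1 ≤ α → α ≤ c - d - 2 →
      2 ≤ ℓ α ∧ ℓ α ≤ d + 1 ∧
      (Finset.Icc (α + 2) (α + ℓ α) ∪ Finset.Icc (c - d + ℓ α) c : Finset ℤ) =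
        Finset.image (γ α) Finset.univ ∧
      Disjoint (Finset.Icc (α + 2) (α + ℓ α)) (Finset.Icc (c - d + ℓ α) c)) :
    ∀ α : ℤ, 1 ≤ α → α ≤ c - d - 3 →
      (leavesSet c d α (ℓ α) \ leavesSet c d (α + 1) (ℓ (α + 1))).card = 1 ∧
      (leavesSet c d (α + 1) (ℓ (α + 1)) \ leavesSet c d α (ℓ α)).card = 1 ∧
      leavesSet c d α (ℓ α) \ leavesSet c d (α + 1) (ℓ (α + 1)) = {(α, α + 1)} := by
  intro α hα₁ hα₂
  obtain ⟨hℓ₂, hℓd, himage, hdisj⟩ := hℓ α hα₁ (by omega)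
  obtain ⟨-, -, himage', -⟩ := hℓ (α + 1) (by omega) (by omega)
  have hinj : Function.Injective (γ α) :=
    injective_of_image_eq_gammaSet hℓ₂ hℓd hdisj himage.symm
  have hmem : α + 2 ∈ Finset.univ.image (γ α) := by
    rw [← himage, Finset.mem_union, Finset.mem_Icc]
    omega
  obtain ⟨i₀, -, hi₀⟩ := Finset.mem_image.mp hmem
  have hsucc : ∀ i, i ≠ i₀ → γ (α + 1) i = γ α i := by
    intro i hi
    have hleast := hγ α hα₁ (by omega) i
    have hne : γ α i ≠ α + 2 := hi₀ ▸ hinj.ne hi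
    exact isLeast_eq_of_le_of_le hleast (hγ (α + 1) (by omega) (by omega) i) (by omega)
      (by have := hleast.1.1; omega)
  have hsub :
      gammaSet c d (α + 1) (ℓ (α + 1)) ⊆ insert (γ (α + 1) i₀) (gammaSet c d α (ℓ α)) := by
    rw [gammaSet, gammaSet, himage, himage']
    exact image_univ_subset_insert_image i₀ hsucc
  have hℓ' := eq_or_eq_sub_one_of_gammaSet_succ_subset hα₂ hℓ₂ hℓd hsub
  rw [leavesSet_sdiff, leavesSet_sdiff, leafIndices_sdiff_succ hα₂ (by omega) hℓ',
    leafIndices_succ_sdiff hα₂ (by omega) hℓd hℓ']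
  simp

end ScrollLeaves
end

section
/- If I^∨, the Alexander dual of the Stanley–Reisner ideal of a simplicial complex Δ, has linear quotients, then Δ is shellable. -/
section IdealResolution

variable {K : Type} [Field K] (σ : Type)

/-- A graded free resolution of a homogeneous ideal `I` of the polynomial ring
`MvPolynomial σ K`:  an exact complex of finite free modules augmented onto `I ⊆ S`, where
the basis element `a` of the `i`-th free module has internal degree `δ i a` and all maps
have homogeneous entries of the appropriate degrees. -/
structure IdealGFR (I : Ideal (MvPolynomial σ K)) where
  ι : ℕ → Type
  fin : ∀ i, Fintype (ι i)
  δ : ∀ i, ι i → ℤ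
  d : ∀ i, (ι (i + 1) →₀ MvPolynomial σ K) →ₗ[MvPolynomial σ K] (ι i →₀ MvPolynomial σ K)
  aug : (ι 0 →₀ MvPolynomial σ K) →ₗ[MvPolynomial σ K] MvPolynomial σ K
  aug_range : LinearMap.range aug = I
  exact_zero : LinearMap.range (d 0) = LinearMap.ker aug
  exact_succ : ∀ i, LinearMap.range (d (i + 1)) = LinearMap.ker (d i)
  homog : ∀ i (a : ι (i + 1)) (b : ι i),
    d i (Finsupp.single a 1) b = 0 ∨
      ∃ m : ℕ, (m : ℤ) = δ (i + 1) a - δ i b ∧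
        d i (Finsupp.single a 1) b ∈ MvPolynomial.homogeneousSubmodule σ K m
  homog_aug : ∀ a : ι 0,
    aug (Finsupp.single a 1) = 0 ∨
      ∃ m : ℕ, (m : ℤ) = δ 0 a ∧
        aug (Finsupp.single a 1) ∈ MvPolynomial.homogeneousSubmodule σ K m

/-- The ideal `I` is generated in the single degree `dd`. -/
def GeneratedInDegree (I : Ideal (MvPolynomial σ K)) (dd : ℕ) : Prop :=
  I = Ideal.span {f | f ∈ I ∧ f ∈ MvPolynomial.homogeneousSubmodule σ K dd}

/-- The ideal `I` has a linear resolution:  it is generated in a single degree `dd` and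
admits a graded free resolution whose `i`-th free module is generated in degrees
`≤ dd + i` (equivalently, its minimal graded free resolution is linear). -/
def HasLinearResolution (I : Ideal (MvPolynomial σ K)) : Prop :=
  ∃ dd : ℕ, GeneratedInDegree σ I dd ∧
    ∃ F : IdealGFR σ I, ∀ i (a : F.ι i), F.δ i a ≤ dd + i

/-- A monomial ideal has linear quotients:  there is an ordering `u 0, …, u (m-1)` of its
minimal monomial generators such that each colon ideal
`(u 0, …, u (j-1)) : u j` is generated by variables. -/
def HasLinearQuotients (J : Ideal (MvPolynomial σ K)) : Prop :=
  ∃ (m : ℕ) (u : Fin m → MvPolynomial σ K),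
    (∀ i, ∃ s : σ →₀ ℕ, u i = MvPolynomial.monomial s 1) ∧
    (∀ i j, i ≠ j → ¬ u i ∣ u j) ∧
    J = Ideal.span (Set.range u) ∧
    ∀ j : Fin m, 0 < (j : ℕ) →
      ∃ V : Set σ, Submodule.colon
          (Ideal.span {x | ∃ i : Fin m, (i : ℕ) < (j : ℕ) ∧ x = u i} :
            Submodule (MvPolynomial σ K) (MvPolynomial σ K))
          (Ideal.span {u j}) =
        Ideal.span (MvPolynomial.X '' V)

end IdealResolution
section StanleyReisner

variable (K : Type) [Field K] (nv : ℕ)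

/-- The Stanley–Reisner ideal of a simplicial complex `Δ` on `Fin nv`:  generated by the
squarefree monomials corresponding to the non-faces of `Δ`. -/
noncomputable def srIdeal (Δ : Finset (Finset (Fin nv))) : Ideal (MvPolynomial (Fin nv) K) :=
  Ideal.span ((fun F : Finset (Fin nv) => ∏ i ∈ F, MvPolynomial.X i) '' {F | F ∉ Δ})

/-- The Alexander dual complex `Δ^∨ = {F : [n] \ F ∉ Δ}`. -/
def dualComplex (Δ : Finset (Finset (Fin nv))) : Finset (Finset (Fin nv)) :=
  Finset.univ.filter fun F => (Finset.univ \ F) ∉ Δ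

/-- `F` is a facet (a maximal face) of `Δ`. -/
def IsFacet (Δ : Finset (Finset (Fin nv))) (F : Finset (Fin nv)) : Prop :=
  F ∈ Δ ∧ ∀ G ∈ Δ, F ⊆ G → G = F

/-- `Δ` is shellable:  its facets admit an order `F₁, …, F_m` such that for all `i < j` the
intersection `⟨F₁,…,F_{j-1}⟩ ∩ ⟨F_j⟩` is pure of dimension `dim F_j − 1`, equivalently
for all `i < j` there are `v ∈ F_j \ F_i` and `k < j` with `F_j \ F_k = {v}`. -/
def Shellable (Δ : Finset (Finset (Fin nv))) : Prop :=
  ∃ (m : ℕ) (Fs : Fin m → Finset (Fin nv)),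
    Function.Injective Fs ∧
    (∀ i, IsFacet nv (Δ := Δ) (Fs i)) ∧
    (∀ F, IsFacet nv (Δ := Δ) F → ∃ i, Fs i = F) ∧
    (∀ i j : Fin m, i < j →
      ∃ v, v ∈ Fs j ∧ v ∉ Fs i ∧ ∃ k : Fin m, k < j ∧ Fs j \ Fs k = {v})

end StanleyReisner

/-
The minimal monomial generators of `I_Δ^∨` are the squarefree monomials `x_{[n] \ F}` with `F`
a facet of `Δ`, so an order of them with linear quotients is an order `F₁, …, F_m` of the facets.
For `x_A` squarefree, `x_A ∈ (u₁, …, u_{j-1}) : u_j` iff `F_j \ F_k ⊆ A` for some `k < j`, and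
`x_A ∈ (x_v : v ∈ V)` iff `A` meets `V`. If that colon ideal is generated by the variables `V`,
then `A = F_j \ F_i` yields some `v ∈ V ∩ (F_j \ F_i)`, and `A = {v}` yields `k < j` with
`F_j \ F_k = {v}`.
-/

open MvPolynomial Finset

section MonomialIdeal

variable {σ R : Type*} [CommSemiring R] [Nontrivial R]

theorem MvPolynomial.monomial_one_mem_span_monomial_image_iff {ι : Type*} {s : ι → σ →₀ ℕ}
    {S : Set ι} {t : σ →₀ ℕ} :
    monomial t (1 : R) ∈ Ideal.span ((fun i => monomial (s i) 1) '' S) ↔ ∃ i ∈ S, s i ≤ t := by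
  classical
  rw [← Set.image_image (fun s => monomial s (1 : R)), mem_ideal_span_monomial_image]
  simp [support_monomial]

theorem MvPolynomial.monomial_one_mem_colon_span_monomial_image_iff {ι : Type*}
    {s : ι → σ →₀ ℕ} {S : Set ι} {r t : σ →₀ ℕ} :
    monomial t (1 : R) ∈ (Ideal.span ((fun i => monomial (s i) 1) '' S)).colon
        (Ideal.span {monomial r (1 : R)}) ↔ ∃ i ∈ S, s i ≤ t + r := by
  rw [Ideal.mem_colon_span_singleton, monomial_mul, one_mul,
    monomial_one_mem_span_monomial_image_iff]

theorem MvPolynomial.monomial_one_mem_span_X_image_iff {V : Set σ} {t : σ →₀ ℕ} :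
    monomial t (1 : R) ∈ Ideal.span (X '' V) ↔ ∃ v ∈ V, t v ≠ 0 := by
  classical
  simp [mem_ideal_span_X_image, support_monomial]

end MonomialIdeal

section SquarefreeExponent

variable {α : Type*}

noncomputable def sqfreeExp (A : Finset α) : α →₀ ℕ := ∑ a ∈ A, Finsupp.single a 1

theorem sqfreeExp_apply [DecidableEq α] (A : Finset α) (a : α) :
    sqfreeExp A a = if a ∈ A then 1 else 0 := by
  simp [sqfreeExp, Finsupp.finsetSum_apply, Finsupp.single_apply]

theorem sqfreeExp_apply_ne_zero {A : Finset α} {a : α} : sqfreeExp A a ≠ 0 ↔ a ∈ A := by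
  classical
  simp [sqfreeExp_apply]

theorem sqfreeExp_le_add_iff [DecidableEq α] {A B C : Finset α} :
    sqfreeExp C ≤ sqfreeExp A + sqfreeExp B ↔ C ⊆ A ∪ B := by
  simp only [Finsupp.le_def, Finsupp.add_apply, sqfreeExp_apply, subset_iff, mem_union]
  refine forall_congr' fun a => ?_
  split_ifs <;> simp_all

theorem sqfreeExp_le_iff {A B : Finset α} : sqfreeExp A ≤ sqfreeExp B ↔ A ⊆ B := by
  classical
  simpa [sqfreeExp] using sqfreeExp_le_add_iff (A := B) (B := ∅) (C := A)

theorem MvPolynomial.prod_X_eq_monomial_sqfreeExp {R : Type*} [CommSemiring R] (A : Finset α) :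
    ∏ a ∈ A, (X a : MvPolynomial α R) = monomial (sqfreeExp A) 1 :=
  (monomial_sum_one A _).symm

theorem sqfreeExp_compl_le_add_iff [Fintype α] [DecidableEq α] {A B C : Finset α} :
    sqfreeExp Cᶜ ≤ sqfreeExp A + sqfreeExp Bᶜ ↔ B \ C ⊆ A := by
  rw [sqfreeExp_le_add_iff]
  simp only [subset_iff, mem_compl, mem_union, mem_sdiff]
  exact forall_congr' fun a => by tauto

theorem exists_sdiff_subset_iff_of_colon_eq_span_X {R ι : Type*} [CommSemiring R]
    [Nontrivial R] [Fintype α] [DecidableEq α] {G : ι → Finset α} {S : Set ι} {j : ι} {V : Set α}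
    (hV : (Ideal.span ((fun k => monomial (sqfreeExp (G k)ᶜ) (1 : R)) '' S)).colon
        (Ideal.span {monomial (sqfreeExp (G j)ᶜ) (1 : R)}) = Ideal.span (X '' V))
    (A : Finset α) : (∃ k ∈ S, G j \ G k ⊆ A) ↔ ∃ v ∈ A, v ∈ V := by
  have hA := SetLike.ext_iff.1 hV (monomial (sqfreeExp A) 1)
  rw [monomial_one_mem_colon_span_monomial_image_iff, monomial_one_mem_span_X_image_iff] at hA
  simpa [sqfreeExp_compl_le_add_iff, sqfreeExp_apply_ne_zero, and_comm] using hA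

end SquarefreeExponent

theorem exists_shelling_witness {α ι : Type*} [DecidableEq α] [Preorder ι] {G : ι → Finset α}
    {j : ι} {V : Set α} (hV : ∀ A : Finset α, (∃ k < j, G j \ G k ⊆ A) ↔ ∃ v ∈ A, v ∈ V)
    (hnot : ∀ k < j, ¬ G j ⊆ G k) {i : ι} (hij : i < j) :
    ∃ v, v ∈ G j ∧ v ∉ G i ∧ ∃ k < j, G j \ G k = {v} := by
  obtain ⟨v, hv, hvV⟩ := (hV (G j \ G i)).1 ⟨i, hij, subset_rfl⟩
  obtain ⟨k, hkj, hk⟩ := (hV {v}).2 ⟨v, mem_singleton_self v, hvV⟩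
  have hne : (G j \ G k).Nonempty := sdiff_nonempty.2 (hnot k hkj)
  obtain ⟨hvj, hvi⟩ := mem_sdiff.1 hv
  exact ⟨v, hvj, hvi, k, hkj, (subset_singleton_iff.1 hk).resolve_left hne.ne_empty⟩

section Shelling

variable {nv : ℕ} {Δ : Finset (Finset (Fin nv))}

theorem monomial_one_mem_srIdeal_dualComplex_iff (K : Type) [Field K] {t : Fin nv →₀ ℕ} :
    monomial t (1 : K) ∈ srIdeal K nv (dualComplex nv Δ) ↔ ∃ F ∈ Δ, sqfreeExp Fᶜ ≤ t := by
  simp_rw [srIdeal, prod_X_eq_monomial_sqfreeExp, monomial_one_mem_span_monomial_image_iff]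
  refine ⟨fun ⟨F, hF, hle⟩ => ⟨Fᶜ, ?_, ?_⟩, fun ⟨F, hF, hle⟩ => ⟨Fᶜ, ?_, hle⟩⟩
  all_goals simp_all [dualComplex, compl_eq_univ_sdiff]

theorem exists_isFacet_superset {F : Finset (Fin nv)} (hF : F ∈ Δ) :
    ∃ G, IsFacet nv Δ G ∧ F ⊆ G := by
  obtain ⟨G, hFG, hG, hmax⟩ := Δ.exists_le_maximal hF
  exact ⟨G, ⟨hG, fun H hH hGH => (hmax hH hGH).antisymm hGH⟩, hFG⟩

variable {ι : Type*} {s : ι → Fin nv →₀ ℕ}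

/-- A minimal generator of the Alexander dual ideal is the complement of a facet. -/
theorem exists_isFacet_eq_sqfreeExp_compl
    (hgen : ∀ t, (∃ k, s k ≤ t) ↔ ∃ F ∈ Δ, sqfreeExp Fᶜ ≤ t)
    (hmin : ∀ i k, s k ≤ s i → k = i) (i : ι) :
    ∃ G, IsFacet nv Δ G ∧ s i = sqfreeExp Gᶜ := by
  obtain ⟨F, hF, hFi⟩ := (hgen (s i)).1 ⟨i, le_rfl⟩
  obtain ⟨G, hG, hFG⟩ := exists_isFacet_superset hF
  have hGi : sqfreeExp Gᶜ ≤ s i := (sqfreeExp_le_iff.2 (compl_subset_compl.2 hFG)).trans hFi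
  obtain ⟨k, hkG⟩ := (hgen _).2 ⟨G, hG.1, le_rfl⟩
  obtain rfl := hmin i k (hkG.trans hGi)
  exact ⟨G, hG, hGi.antisymm' hkG⟩

theorem exists_eq_of_isFacet {G : ι → Finset (Fin nv)}
    (hgen : ∀ t, (∃ k, sqfreeExp (G k)ᶜ ≤ t) ↔ ∃ F ∈ Δ, sqfreeExp Fᶜ ≤ t)
    (hG : ∀ i, IsFacet nv Δ (G i)) {F : Finset (Fin nv)} (hF : IsFacet nv Δ F) :
    ∃ i, G i = F := by
  obtain ⟨k, hk⟩ := (hgen _).2 ⟨F, hF.1, le_rfl⟩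
  exact ⟨k, hF.2 _ (hG k).1 (compl_subset_compl.1 (sqfreeExp_le_iff.1 hk))⟩

end Shelling

theorem shellable_of_dual_linearQuotients_general (K : Type) [Field K] (nv : ℕ)
    (Δ : Finset (Finset (Fin nv)))
    (hlq : HasLinearQuotients (Fin nv) (srIdeal K nv (dualComplex nv Δ))) :
    Shellable nv Δ := by
  classical
  obtain ⟨m, u, hmon, hanti, hspan, hcolon⟩ := hlq
  choose s hs using hmon
  obtain rfl : u = fun i => monomial (s i) 1 := funext hs
  have hgen (t : Fin nv →₀ ℕ) : (∃ k, s k ≤ t) ↔ ∃ F ∈ Δ, sqfreeExp Fᶜ ≤ t := by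
    rw [← monomial_one_mem_srIdeal_dualComplex_iff K, hspan, ← Set.image_univ,
      monomial_one_mem_span_monomial_image_iff]
    simp
  have hmin (i k : Fin m) (hki : s k ≤ s i) : k = i :=
    by_contra fun hne => hanti k i hne (monomial_dvd_monomial.2 ⟨.inr hki, one_dvd _⟩)
  choose G hG hsG using exists_isFacet_eq_sqfreeExp_compl hgen hmin
  obtain rfl : s = fun i => sqfreeExp (G i)ᶜ := funext hsG
  beta_reduce at hcolon hmin
  have hinj : Function.Injective G := fun i k h => hmin k i (by rw [h])
  refine ⟨m, G, hinj, hG, fun F hF => exists_eq_of_isFacet hgen hG hF, fun i j hij => ?_⟩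
  obtain ⟨V, hV⟩ := hcolon j (Nat.zero_le i |>.trans_lt hij)
  have hprev : {x | ∃ k : Fin m, (k : ℕ) < j ∧ x = monomial (sqfreeExp (G k)ᶜ) (1 : K)} =
      (fun k => monomial (sqfreeExp (G k)ᶜ) 1) '' {k | k < j} := by
    ext; simp [eq_comm]
  rw [hprev] at hV
  exact exists_shelling_witness (exists_sdiff_subset_iff_of_colon_eq_span_X hV)
    (fun k hkj hjk => hkj.ne (hinj ((hG j).2 _ (hG k).1 hjk))) hij

/-- If the Alexander dual `I_Δ^∨ = I_{Δ^∨}` of the Stanley–Reisner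
ideal of a simplicial complex `Δ` has linear quotients, then `Δ` is shellable. -/
theorem shellable_of_dual_linearQuotients (K : Type) [Field K] (nv : ℕ)
    (Δ : Finset (Finset (Fin nv))) (hΔ : ∀ F ∈ Δ, ∀ G ⊆ F, G ∈ Δ)
    (hlq : HasLinearQuotients (Fin nv) (srIdeal K nv (dualComplex nv Δ))) :
    Shellable nv Δ :=
  shellable_of_dual_linearQuotients_general K nv Δ hlq
end
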